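/- Fix Λ > 1, set a := 1 − e^{−4} + (1/3)·(1 − e^{−4})²·Λ^{−1/4}, and let Φ : ℝ → ℝ be a convex even function with Φ(z) = |z| for |z| ≥ 1/100. Define, for s ∈ [Λ, Λ + Λ^{1/4}], v_Λ(s) := (1 − e^{−4Λ/s}) + a·√((Λ + 2Λ^{1/4} − s)/(a + Λ + 2Λ^{1/4} − s)) − Λ^{−1/4}·Φ(Λ^{1/4}·((1 − e^{−4Λ/s}) − a·√((Λ + 2Λ^{1/4} − s)/(a + Λ + 2Λ^{1/4} − s)))). Then v_Λ is concave on the interval [Λ, Λ + Λ^{1/4}]. -/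

import Mathlib

/-!
Write `v_Λ = F + G − ψ(F − G)` with `F(s) = 1 − e^{−4Λ/s}`, `G(s) = a·√((c − s)/(d − s))`,
`c = Λ + 2Λ^{1/4}`, `d = a + c` and `ψ(t) = Λ^{−1/4}·Φ(Λ^{1/4} t)`. Both `F` and `G` are concave
on `[Λ, Λ + Λ^{1/4}]`: `e^{−k/s}` is convex for `0 < s ≤ k/2`, and
`(c − s)/(d − s) = 1 − (d − c)/(d − s)` is concave and nonnegative for `s ≤ c ≤ d`. The rescaled
`ψ` is again convex and equal to `|t|` for large `|t|`, hence 1-Lipschitz. For convex 1-Lipschitz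
`ψ` the map `(p, q) ↦ p + q − ψ(p − q)` is concave and nondecreasing in each variable, so it
preserves concavity of `(F, G)`.
-/

open Real Set

noncomputable section

/-- The constant `a = 1 − e^{−4} + (1/3)·(1 − e^{−4})²·Λ^{−1/4}`. -/
def aConst (Λ : ℝ) : ℝ :=
  1 - Real.exp (-4) + (1 / 3) * (1 - Real.exp (-4)) ^ 2 * Λ ^ (-(1 : ℝ) / 4)

/-- The interpolated cap profile
`v_Λ(s) = (1 − e^{−4Λ/s}) + a·√((Λ + 2Λ^{1/4} − s)/(a + Λ + 2Λ^{1/4} − s))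
  − Λ^{−1/4}·Φ(Λ^{1/4}·((1 − e^{−4Λ/s}) − a·√((Λ + 2Λ^{1/4} − s)/(a + Λ + 2Λ^{1/4} − s))))`. -/
def vProfile (Λ : ℝ) (Φ : ℝ → ℝ) (s : ℝ) : ℝ :=
  (1 - Real.exp (-(4 * Λ) / s))
  + aConst Λ * Real.sqrt ((Λ + 2 * Λ ^ ((1 : ℝ) / 4) - s)
      / (aConst Λ + Λ + 2 * Λ ^ ((1 : ℝ) / 4) - s))
  - Λ ^ (-(1 : ℝ) / 4) * Φ (Λ ^ ((1 : ℝ) / 4) *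
      ((1 - Real.exp (-(4 * Λ) / s))
        - aConst Λ * Real.sqrt ((Λ + 2 * Λ ^ ((1 : ℝ) / 4) - s)
            / (aConst Λ + Λ + 2 * Λ ^ ((1 : ℝ) / 4) - s))))

theorem convexOn_exp_neg_div {k : ℝ} (hk : 0 ≤ k) :
    ConvexOn ℝ (Ioc 0 (k / 2)) (fun s => exp (-k / s)) := by
  have hinner : ∀ x ≠ 0, HasDerivAt (fun s => -k / s) (k / x ^ 2) x := fun x hx => by
    simpa using (hasDerivAt_const x (-k)).fun_div (hasDerivAt_id' x) hx
  refine convexOn_of_hasDerivWithinAt2_nonneg (convex_Ioc 0 (k / 2))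
    (f' := fun x => exp (-k / x) * (k / x ^ 2))
    (f'' := fun x => exp (-k / x) * k * (k - 2 * x) / x ^ 4)
    (fun x hx => (hinner x hx.1.ne').exp.continuousAt.continuousWithinAt) ?_ ?_ ?_ <;>
    rw [interior_Ioc] <;> intro x ⟨hx0, hxk⟩
  · exact (hinner x hx0.ne').exp.hasDerivWithinAt
  · refine ((hinner x hx0.ne').exp.fun_mul
      ((hasDerivAt_const x k).fun_div (hasDerivAt_pow 2 x) (pow_ne_zero 2 hx0.ne'))).congr_deriv
      ?_ |>.hasDerivWithinAt
    field_simp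
    ring
  · have : 0 ≤ k - 2 * x := by linarith
    positivity

theorem concaveOn_sub_div_sub {c d : ℝ} (hcd : c ≤ d) :
    ConcaveOn ℝ (Iio d) (fun s => (c - s) / (d - s)) := by
  let g : ℝ →ᵃ[ℝ] ℝ := AffineMap.const ℝ ℝ d - AffineMap.id ℝ ℝ
  have hg : g ⁻¹' Ioi 0 = Iio d := by ext; simp [g]
  have hinv := (convexOn_zpow (𝕜 := ℝ) (-1)).comp_affineMap g
  rw [hg] at hinv
  refine ((hinv.smul (sub_nonneg.2 hcd)).neg.add_const 1).congr fun s hs => ?_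
  have : d - s ≠ 0 := (sub_pos.2 hs).ne'
  simp only [g, zpow_neg, zpow_one, AffineMap.coe_sub, AffineMap.coe_const, AffineMap.coe_id,
    Function.comp_apply, Pi.sub_apply, Function.const_apply, id_eq, smul_eq_mul, Pi.add_apply,
    Pi.neg_apply]
  field_simp
  ring

theorem ConcaveOn.sqrt {E : Type*} [AddCommMonoid E] [Module ℝ E] {s : Set E} {f : E → ℝ}
    (hf : ConcaveOn ℝ s f) (hf₀ : ∀ x ∈ s, 0 ≤ f x) : ConcaveOn ℝ s (fun x => √(f x)) :=
  ⟨hf.1, fun x hx y hy _ _ ha hb hab =>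
    (strictConcaveOn_sqrt.concaveOn.2 (hf₀ x hx) (hf₀ y hy) ha hb hab).trans
      (Real.sqrt_le_sqrt (hf.2 hx hy ha hb hab))⟩

theorem ConvexOn.inv_mul_comp_mul {Φ : ℝ → ℝ} (hΦ : ConvexOn ℝ univ Φ) {c : ℝ} (hc : 0 ≤ c) :
    ConvexOn ℝ univ (fun t => c⁻¹ * Φ (c * t)) :=
  (hΦ.comp_linearMap (LinearMap.mul ℝ ℝ c)).smul (inv_nonneg.2 hc)

/-- The slopes of `Φ` far to the left and far to the right are `−1` and `1`, and slopes of a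
convex function increase. -/
theorem ConvexOn.abs_sub_le_of_eq_abs {Φ : ℝ → ℝ} {r : ℝ} (hΦ : ConvexOn ℝ univ Φ)
    (habs : ∀ z, r ≤ |z| → Φ z = |z|) {u v : ℝ} (huv : u < v) : |Φ v - Φ u| ≤ v - u := by
  set M := max r (max |u| |v|) + 1
  have hrM := le_max_left r (max |u| |v|)
  have huvM := le_max_right r (max |u| |v|)
  have hM : ∀ z, M ≤ |z| → Φ z = |z| := fun z hz => habs z (by linarith)
  have hvM : v < M := by linarith [le_abs_self v, le_max_right |u| |v|]
  have huM : -M < u := by linarith [neg_abs_le u, le_max_left |u| |v|]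
  have hM0 : 0 ≤ M := by linarith [abs_nonneg u, le_max_left |u| |v|]
  have hslope_le : (Φ v - Φ u) / (v - u) ≤ 1 := calc
    _ ≤ (Φ M - Φ v) / (M - v) := hΦ.slope_mono_adjacent trivial trivial huv hvM
    _ ≤ (Φ (M + 1) - Φ M) / (M + 1 - M) :=
      hΦ.slope_mono_adjacent trivial trivial hvM (by linarith)
    _ = 1 := by
      rw [hM M (le_abs_self M), hM (M + 1) (by rw [abs_of_nonneg (by linarith)]; linarith),
        abs_of_nonneg hM0, abs_of_nonneg (by linarith)]
      norm_num
  have hslope_ge : -1 ≤ (Φ v - Φ u) / (v - u) := calc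
    -1 = (Φ (-M) - Φ (-(M + 1))) / (-M - -(M + 1)) := by
      rw [hM (-M) (by rw [abs_neg]; exact le_abs_self M),
        hM (-(M + 1)) (by rw [abs_neg, abs_of_nonneg (by linarith)]; linarith),
        abs_neg, abs_neg, abs_of_nonneg hM0, abs_of_nonneg (by linarith)]
      norm_num
    _ ≤ (Φ u - Φ (-M)) / (u - -M) := hΦ.slope_mono_adjacent trivial trivial (by linarith) huM
    _ ≤ (Φ v - Φ u) / (v - u) := hΦ.slope_mono_adjacent trivial trivial huM huv
  have hvu : 0 < v - u := sub_pos.2 huv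
  rw [div_le_one hvu] at hslope_le
  rw [le_div_iff₀ hvu] at hslope_ge
  exact abs_le.2 ⟨by linarith, hslope_le⟩

theorem ConvexOn.lipschitzWith_one_of_eq_abs {Φ : ℝ → ℝ} {r : ℝ} (hΦ : ConvexOn ℝ univ Φ)
    (habs : ∀ z, r ≤ |z| → Φ z = |z|) : LipschitzWith 1 Φ := by
  refine LipschitzWith.of_dist_le_mul fun x y => ?_
  rw [NNReal.coe_one, one_mul, Real.dist_eq, Real.dist_eq]
  rcases lt_trichotomy x y with h | rfl | h
  · rw [abs_sub_comm, abs_sub_comm x, abs_of_pos (sub_pos.2 h)]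
    exact hΦ.abs_sub_le_of_eq_abs habs h
  · simp
  · rw [abs_of_pos (sub_pos.2 h)]
    exact hΦ.abs_sub_le_of_eq_abs habs h

theorem ConcaveOn.add_sub_comp_sub {E : Type*} [AddCommMonoid E] [Module ℝ E] {s : Set E}
    {F G : E → ℝ} {ψ : ℝ → ℝ} (hF : ConcaveOn ℝ s F) (hG : ConcaveOn ℝ s G)
    (hψ : ConvexOn ℝ univ ψ) (hψ₁ : LipschitzWith 1 ψ) :
    ConcaveOn ℝ s (fun x => F x + G x - ψ (F x - G x)) := by
  refine ⟨hF.1, fun x hx y hy a b ha hb hab => ?_⟩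
  set z := a • x + b • y
  have hFz : a * F x + b * F y ≤ F z := hF.2 hx hy ha hb hab
  have hGz : a * G x + b * G y ≤ G z := hG.2 hx hy ha hb hab
  have hconv : ψ ((a * F x + b * F y) - (a * G x + b * G y)) ≤
      a * ψ (F x - G x) + b * ψ (F y - G y) := by
    rw [show a * F x + b * F y - (a * G x + b * G y) = a * (F x - G x) + b * (F y - G y) by ring]
    exact hψ.2 (mem_univ _) (mem_univ _) ha hb hab
  have hlip := hψ₁.le_add_mul (F z - G z) ((a * F x + b * F y) - (a * G x + b * G y))
  rw [NNReal.coe_one, one_mul, Real.dist_eq] at hlip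
  have habs : |F z - G z - ((a * F x + b * F y) - (a * G x + b * G y))| ≤
      (F z - (a * F x + b * F y)) + (G z - (a * G x + b * G y)) :=
    abs_le.2 ⟨by linarith, by linarith⟩
  simp only [smul_eq_mul]
  linarith

theorem stmt11_general (Λ : ℝ) (hΛ : 1 < Λ) (Φ : ℝ → ℝ)
    (hΦconv : ConvexOn ℝ Set.univ Φ)
    (hΦabs : ∀ z : ℝ, 1 / 100 ≤ |z| → Φ z = |z|) :
    ConcaveOn ℝ (Set.Icc Λ (Λ + Λ ^ ((1 : ℝ) / 4))) (vProfile Λ Φ) := by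
  set c := Λ ^ ((1 : ℝ) / 4)
  have hc : 0 < c := by positivity
  have hcΛ : c ≤ Λ := rpow_le_self_of_one_le hΛ.le (by norm_num)
  have ha : 0 ≤ aConst Λ :=
    add_nonneg (sub_nonneg.2 (exp_le_one_iff.2 (by norm_num))) (by positivity)
  have hF : ConcaveOn ℝ (Icc Λ (Λ + c)) (fun s => 1 - exp (-(4 * Λ) / s)) :=
    (concaveOn_const 1 (convex_Icc _ _)).sub <| (convexOn_exp_neg_div (by positivity)).subset
      (fun s hs => ⟨by linarith [hs.1], by linarith [hs.2]⟩) (convex_Icc _ _)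
  have hratio : ConcaveOn ℝ (Icc Λ (Λ + c))
      (fun s => (Λ + 2 * c - s) / (aConst Λ + Λ + 2 * c - s)) :=
    (concaveOn_sub_div_sub (by linarith)).subset
      (fun s hs => mem_Iio.2 (by linarith [hs.2])) (convex_Icc _ _)
  have hG := (hratio.sqrt fun s hs =>
    div_nonneg (by linarith [hs.2]) (by linarith [hs.2])).smul ha
  have hψabs : ∀ t, 1 / 100 / c ≤ |t| → c⁻¹ * Φ (c * t) = |t| := fun t ht => by
    rw [hΦabs _ (by rwa [abs_mul, abs_of_pos hc, ← div_le_iff₀' hc]), abs_mul, abs_of_pos hc,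
      inv_mul_cancel_left₀ hc.ne']
  have hψ := hΦconv.inv_mul_comp_mul hc.le
  have hinv : Λ ^ (-(1 : ℝ) / 4) = c⁻¹ := by rw [neg_div, rpow_neg (by linarith)]
  unfold vProfile
  rw [hinv]
  exact hF.add_sub_comp_sub hG hψ (hψ.lipschitzWith_one_of_eq_abs hψabs)

/-- For `Λ > 1` and `Φ : ℝ → ℝ` convex and even with `Φ(z) = |z|`
for `|z| ≥ 1/100`, the profile `v_Λ` is concave on `[Λ, Λ + Λ^{1/4}]`. -/
theorem stmt11 (Λ : ℝ) (hΛ : 1 < Λ) (Φ : ℝ → ℝ)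
    (hΦconv : ConvexOn ℝ Set.univ Φ) (hΦeven : ∀ z : ℝ, Φ (-z) = Φ z)
    (hΦabs : ∀ z : ℝ, 1 / 100 ≤ |z| → Φ z = |z|) :
    ConcaveOn ℝ (Set.Icc Λ (Λ + Λ ^ ((1 : ℝ) / 4))) (vProfile Λ Φ) :=
  stmt11_general Λ hΛ Φ hΦconv hΦabs
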